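/- Define endomorphisms f_0, f_1 of the free group F_2 = ⟨x,y⟩ by f_0(x) = x^5y, f_0(y) = y^5x, f_1(x) = x^2yxyx, f_1(y) = y^2xyxy, and for w ∈ 2^{<ℕ} let f_w be the corresponding composition. Then for every w ∈ 2^{<ℕ}, the first letters of f_w(x), f_w(y), f_w(x^{-1}), f_w(y^{-1}) are pairwise distinct, and likewise their last letters; consequently f_w maps freely reduced words to freely reduced words and cyclically reduced words to cyclically reduced words. -/

import Mathlib

/-- `x` and `y`, the generators of `F₂ = FreeGroup Bool` (`x = of false`, `y = of true`). -/
def Fx : FreeGroup Bool := FreeGroup.of false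
def Fy : FreeGroup Bool := FreeGroup.of true

/-- `f₀ : x ↦ x⁵y, y ↦ y⁵x`. -/
def F0 : Monoid.End (FreeGroup Bool) :=
  FreeGroup.lift (fun b => if b then Fy ^ 5 * Fx else Fx ^ 5 * Fy)

/-- `f₁ : x ↦ x²yxyx, y ↦ y²xyxy`. -/
def F1 : Monoid.End (FreeGroup Bool) :=
  FreeGroup.lift (fun b => if b then Fy ^ 2 * Fx * Fy * Fx * Fy
    else Fx ^ 2 * Fy * Fx * Fy * Fx)

/-- `f_w` for `w ∈ 2^{<ℕ}`: the composition of the `f_i` along `w`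
(`f_e = id`, `f_{u⌢v} = f_u ∘ f_v`). -/
def Fw (w : List Bool) : Monoid.End (FreeGroup Bool) :=
  (w.map (fun b => if b then F1 else F0)).prod

/-- The image under `f_w` of a single letter `ℓ ∈ {x^{±1}, y^{±1}}`
(a letter is a pair (generator, sign)). -/
def FwLetter (w : List Bool) (ℓ : Bool × Bool) : FreeGroup Bool :=
  Fw w (FreeGroup.mk [ℓ])

/-- A word is cyclically reduced if its first letter is not the inverse of its last. -/
def CyclicallyReduced (g : FreeGroup Bool) : Prop :=
  ∀ p q : Bool × Bool, g.toWord.head? = some p → g.toWord.getLast? = some q →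
    p ≠ (q.1, !q.2)

/-!
Say that a homomorphism `φ` of free groups has distinct initials if the reduced words `φ(ℓ)`,
for the letters `ℓ = a^{±1}`, have pairwise distinct first letters. The last letter of `φ(ℓ)` is the
inverse of the first letter of `φ(ℓ⁻¹)`, so the last letters are pairwise distinct as well, no
`φ(ℓ)` is empty, and for adjacent letters `ℓ ℓ'` of a reduced word (so `ℓ' ≠ ℓ⁻¹`) the end of
`φ(ℓ)` cannot cancel against the start of `φ(ℓ')`. Hence `φ` maps a reduced word to the plain
concatenation of the blocks `φ(ℓ)`; as `L` is cyclically reduced iff `L L` is reduced, `φ` also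
preserves cyclically reduced words. In particular the first letter of `(φ ∘ ψ)(ℓ)` is the
first letter of `φ` applied to the first letter of `ψ(ℓ)`, so the property is closed under
composition; `f₀` and `f₁` have it by inspection, hence so does every `f_w`.
-/

open Function

namespace FreeGroup

variable {α β γ : Type*} [DecidableEq β]

def letterImage (φ : FreeGroup α →* FreeGroup β) (ℓ : α × Bool) : List (β × Bool) :=
  (φ (mk [ℓ])).toWord

theorem letterImage_inv (φ : FreeGroup α →* FreeGroup β) (ℓ : α × Bool) :
    letterImage φ (ℓ.1, !ℓ.2) = invRev (letterImage φ ℓ) := by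
  rw [letterImage, letterImage, ← toWord_inv, ← _root_.map_inv, inv_mk]
  rfl

theorem getLast?_letterImage (φ : FreeGroup α →* FreeGroup β) (ℓ : α × Bool) :
    (letterImage φ ℓ).getLast? = (letterImage φ (ℓ.1, !ℓ.2)).head?.map fun b => (b.1, !b.2) := by
  rw [letterImage_inv, invRev, List.head?_reverse, List.getLast?_map, Option.map_map]
  simp [comp_def]

theorem map_mk_eq_mk_flatMap [DecidableEq α] (φ : FreeGroup α →* FreeGroup β)
    (L : List (α × Bool)) : φ (mk L) = mk (L.flatMap (letterImage φ)) := by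
  induction L with
  | nil => exact _root_.map_one φ
  | cons ℓ L ih =>
    rw [← List.singleton_append, ← mul_mk, _root_.map_mul, ih, ← mk_toWord (x := φ (mk [ℓ])),
      mul_mk]
    rfl

theorem isCyclicallyReduced_iff_isReduced_append_self {L : List (α × Bool)} :
    IsCyclicallyReduced L ↔ IsReduced (L ++ L) := by
  rw [isCyclicallyReduced_iff, IsReduced, IsReduced, List.isChain_append]
  exact ⟨fun ⟨h, hc⟩ => ⟨h, h, hc⟩, fun ⟨h, _, hc⟩ => ⟨h, hc⟩⟩

def HasDistinctInitials (φ : FreeGroup α →* FreeGroup β) : Prop :=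
  Injective fun ℓ => (letterImage φ ℓ).head?

theorem hasDistinctInitials_id : HasDistinctInitials (MonoidHom.id (FreeGroup β)) := by
  intro a b hab
  simpa [letterImage, toWord_mk, IsReduced.singleton.reduce_eq] using hab

namespace HasDistinctInitials

variable [DecidableEq γ] {φ : FreeGroup β →* FreeGroup γ} {ψ : FreeGroup α →* FreeGroup β}

theorem letterImage_ne_nil (h : HasDistinctInitials ψ) (ℓ : α × Bool) : letterImage ψ ℓ ≠ [] := by
  intro hnil
  have hinv : letterImage ψ (ℓ.1, !ℓ.2) = [] := by rw [letterImage_inv, hnil]; rfl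
  have := h (show (letterImage ψ _).head? = (letterImage ψ ℓ).head? by rw [hinv, hnil])
  simp [Prod.ext_iff] at this

theorem getLast?_injective (h : HasDistinctInitials ψ) :
    Injective fun ℓ => (letterImage ψ ℓ).getLast? := by
  intro a b hab
  simp only [getLast?_letterImage] at hab
  have hinv : Injective fun b : β × Bool => (b.1, !b.2) := fun c d hcd => by
    simpa [Prod.ext_iff] using hcd
  have := h (Option.map_injective hinv hab)
  simpa [Prod.ext_iff] using this

theorem rel_getLast?_head? (h : HasDistinctInitials ψ) {ℓ ℓ' : α × Bool}
    (hℓ : ℓ.1 = ℓ'.1 → ℓ.2 = ℓ'.2) :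
    ∀ a ∈ (letterImage ψ ℓ).getLast?, ∀ b ∈ (letterImage ψ ℓ').head?, a.1 = b.1 → a.2 = b.2 := by
  intro a ha b hb hab
  by_contra hne
  rw [Option.mem_def, getLast?_letterImage, Option.map_eq_some_iff] at ha
  obtain ⟨c, hc, rfl⟩ := ha
  have hcb : c = b := Prod.ext hab (by simpa using hne)
  have hℓ' := h (show (letterImage ψ _).head? = (letterImage ψ ℓ').head? by rw [hc, hcb, hb])
  subst hℓ'
  simp at hℓ

theorem isReduced_flatMap (h : HasDistinctInitials ψ) {L : List (α × Bool)} (hL : IsReduced L) :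
    IsReduced (L.flatMap (letterImage ψ)) := by
  have hne : [] ∉ L.map (letterImage ψ) := by
    simpa only [List.mem_map, not_exists, not_and] using fun ℓ _ => h.letterImage_ne_nil ℓ
  rw [IsReduced, List.flatMap_def, List.isChain_flatten hne, List.isChain_map]
  refine ⟨fun w hw => ?_, hL.imp fun _ _ => h.rel_getLast?_head?⟩
  obtain ⟨ℓ, -, rfl⟩ := List.mem_map.1 hw
  exact isReduced_toWord

theorem toWord_map [DecidableEq α] (h : HasDistinctInitials ψ) (g : FreeGroup α) :
    (ψ g).toWord = g.toWord.flatMap (letterImage ψ) := by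
  conv_lhs => rw [← mk_toWord (x := g), map_mk_eq_mk_flatMap, toWord_mk]
  exact (h.isReduced_flatMap isReduced_toWord).reduce_eq

theorem isCyclicallyReduced_flatMap (h : HasDistinctInitials ψ) {L : List (α × Bool)}
    (hL : IsCyclicallyReduced L) : IsCyclicallyReduced (L.flatMap (letterImage ψ)) := by
  rw [isCyclicallyReduced_iff_isReduced_append_self, ← List.flatMap_append] at *
  exact h.isReduced_flatMap hL

theorem letterImage_comp [DecidableEq α] (hφ : HasDistinctInitials φ) (ℓ : α × Bool) :
    letterImage (φ.comp ψ) ℓ = (letterImage ψ ℓ).flatMap (letterImage φ) :=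
  hφ.toWord_map _

theorem comp [DecidableEq α] (hφ : HasDistinctInitials φ)
    (hψ : HasDistinctInitials ψ) : HasDistinctInitials (φ.comp ψ) := by
  have head?_comp (ℓ : α × Bool) : (letterImage (φ.comp ψ) ℓ).head? =
      (letterImage φ ((letterImage ψ ℓ).head (hψ.letterImage_ne_nil ℓ))).head? := by
    obtain ⟨c, t, hct⟩ := List.exists_cons_of_ne_nil (hψ.letterImage_ne_nil ℓ)
    rw [letterImage_comp hφ]
    simp only [hct, List.head_cons, List.flatMap_cons,
      List.head?_append_of_ne_nil _ (hφ.letterImage_ne_nil c)]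
  intro a b hab
  simp only [head?_comp] at hab
  apply hψ
  simp only [List.head?_eq_some_head (hψ.letterImage_ne_nil _), hφ hab]

end HasDistinctInitials
end FreeGroup

theorem hasDistinctInitials_F0 : FreeGroup.HasDistinctInitials F0 := by
  unfold FreeGroup.HasDistinctInitials FreeGroup.letterImage
  decide

theorem hasDistinctInitials_F1 : FreeGroup.HasDistinctInitials F1 := by
  unfold FreeGroup.HasDistinctInitials FreeGroup.letterImage
  decide

theorem hasDistinctInitials_Fw (w : List Bool) : FreeGroup.HasDistinctInitials (Fw w) := by
  induction w with
  | nil => exact FreeGroup.hasDistinctInitials_id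
  | cons b w ih =>
    rw [Fw, List.map_cons, List.prod_cons]
    cases b
    · exact hasDistinctInitials_F0.comp ih
    · exact hasDistinctInitials_F1.comp ih

theorem cyclicallyReduced_iff_isCyclicallyReduced (g : FreeGroup Bool) :
    CyclicallyReduced g ↔ FreeGroup.IsCyclicallyReduced g.toWord := by
  have key : ∀ p q : Bool × Bool, p ≠ (q.1, !q.2) ↔ (q.1 = p.1 → q.2 = p.2) := by decide
  simp only [CyclicallyReduced, FreeGroup.isCyclicallyReduced_iff, FreeGroup.isReduced_toWord,
    true_and, key, Option.mem_def]
  exact ⟨fun h q hq p hp => h p q hp hq, fun h p q hp hq => h q hq p hp⟩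

theorem Fw_letters_distinct (w : List Bool) :
    Function.Injective (fun ℓ : Bool × Bool => (FwLetter w ℓ).toWord.head?) ∧
    Function.Injective (fun ℓ : Bool × Bool => (FwLetter w ℓ).toWord.getLast?) ∧
    (∀ g : FreeGroup Bool,
      (Fw w g).toWord = g.toWord.flatMap (fun ℓ => (FwLetter w ℓ).toWord)) ∧
    (∀ g : FreeGroup Bool, CyclicallyReduced g → CyclicallyReduced (Fw w g)) := by
  have h := hasDistinctInitials_Fw w
  refine ⟨h, h.getLast?_injective, h.toWord_map, fun g hg => ?_⟩
  rw [cyclicallyReduced_iff_isCyclicallyReduced] at hg ⊢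
  have := h.isCyclicallyReduced_flatMap hg
  rwa [← h.toWord_map] at this
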